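/- arXiv:1207.2547 — 5 statements merged into one kernel-verified Lean document; each statement's English description precedes it below -/
import Mathlib

section
/- Let ψ : G →+ H be a surjective homomorphism of additive commutative groups, and let R be a commutative ring with a G-grading 𝒜 : G → AddSubgroup R (i.e. GradedRing 𝒜). Then the ψ-coarsened family 𝒜_[ψ] : H → AddSubgroup R defined by 𝒜_[ψ] h = ⨆_{g ∈ ψ⁻¹(h)} 𝒜 g is an H-grading of R: it satisfies 1 ∈ 𝒜_[ψ] 0, 𝒜_[ψ] h * 𝒜_[ψ] h' ⊆ 𝒜_[ψ] (h + h'), and the components 𝒜_[ψ] h form an internal direct sum decomposition of R (i.e. GradedRing 𝒜_[ψ]). -/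
/-! Regrouping the `G`-graded direct sum `⨁ g, ℳ g` along the fibres of `ψ` gives an additive map
onto `⨁ h, coarsen ψ ℳ h` (onto because each coarse component is generated by the components in
its fibre) through which the canonical map of `ℳ` factors. Bijectivity of the latter therefore
passes to the canonical map of the coarsening. -/

/-- Coarsening of a grading along a surjective group homomorphism `ψ`:
the component of degree `h` is the supremum of the components of the degrees
in the fibre `ψ ⁻¹' {h}`. -/
def AddSubgroup.coarsen {G H M : Type*} [AddCommGroup G] [AddCommGroup H]
    [AddCommGroup M] (ψ : G →+ H) (ℳ : G → AddSubgroup M) (h : H) : AddSubgroup M :=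
  ⨆ g ∈ ψ ⁻¹' {h}, ℳ g

namespace AddSubgroup

variable {G H M : Type*} [AddCommGroup G] [AddCommGroup H] [AddCommGroup M]
  (ψ : G →+ H) (ℳ : G → AddSubgroup M)

theorem coarsen_eq_iSup_fiber (h : H) : coarsen ψ ℳ h = ⨆ g : ψ ⁻¹' {h}, ℳ g :=
  iSup_subtype'

theorem le_coarsen {g : G} {h : H} (hg : ψ g = h) : ℳ g ≤ coarsen ψ ℳ h :=
  le_biSup ℳ hg

instance coarsen.gradedMonoid {R : Type*} [Ring R] (𝒜 : G → AddSubgroup R)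
    [SetLike.GradedMonoid 𝒜] : SetLike.GradedMonoid (coarsen ψ 𝒜) where
  one_mem := le_coarsen ψ 𝒜 (map_zero ψ) SetLike.GradedOne.one_mem
  mul_mem h h' x y hx hy := by
    rw [coarsen_eq_iSup_fiber] at hx hy
    induction hx using iSup_induction' with
    | hp g a ha =>
      induction hy using iSup_induction' with
      | hp g' b hb =>
        exact le_coarsen ψ 𝒜 (by rw [map_add, g.2, g'.2]) (SetLike.mul_mem_graded ha hb)
      | h1 => simp
      | hadd b c _ _ hb hc => simpa only [mul_add] using add_mem hb hc
    | h1 => simp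
    | hadd a b _ _ ha hb => simpa only [add_mul] using add_mem ha hb

variable [DecidableEq G] [DecidableEq H]

def coarsenMap : (DirectSum G fun g => ℳ g) →+ DirectSum H fun h => coarsen ψ ℳ h :=
  DirectSum.toAddMonoid fun g =>
    (DirectSum.of (fun h => coarsen ψ ℳ h) (ψ g)).comp (inclusion (le_coarsen ψ ℳ rfl))

theorem coeAddMonoidHom_comp_coarsenMap :
    (DirectSum.coeAddMonoidHom (coarsen ψ ℳ)).comp (coarsenMap ψ ℳ) =
      DirectSum.coeAddMonoidHom ℳ := by
  ext g x
  simp [coarsenMap]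

theorem of_mem_range_coarsenMap {h : H} (x : coarsen ψ ℳ h) :
    DirectSum.of (fun h => coarsen ψ ℳ h) h x ∈ (coarsenMap ψ ℳ).range := by
  suffices coarsen ψ ℳ h ≤ ((coarsenMap ψ ℳ).range.comap
      (DirectSum.of (fun h => coarsen ψ ℳ h) h)).map (coarsen ψ ℳ h).subtype by
    obtain ⟨y, hy, hyx⟩ := this x.2
    exact Subtype.ext hyx ▸ hy
  refine iSup₂_le fun g (hg : ψ g = h) a ha => ?_
  subst hg
  exact ⟨⟨a, le_coarsen ψ ℳ rfl ha⟩,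
    ⟨DirectSum.of _ g ⟨a, ha⟩, DirectSum.toAddMonoid_of _ _ _⟩, rfl⟩

theorem coarsenMap_surjective : Function.Surjective (coarsenMap ψ ℳ) := by
  rw [← AddMonoidHom.range_eq_top, eq_top_iff]
  rintro x -
  induction x using DirectSum.induction_on with
  | zero => exact zero_mem _
  | of h x => exact of_mem_range_coarsenMap ψ ℳ x
  | add x y hx hy => exact add_mem hx hy

end AddSubgroup

open AddSubgroup in
theorem DirectSum.IsInternal.coarsen {G H M : Type*} [AddCommGroup G] [AddCommGroup H]
    [AddCommGroup M] [DecidableEq G] [DecidableEq H] {ℳ : G → AddSubgroup M}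
    (hℳ : DirectSum.IsInternal ℳ) (ψ : G →+ H) :
    DirectSum.IsInternal (AddSubgroup.coarsen ψ ℳ) := by
  have hcomp : ⇑(DirectSum.coeAddMonoidHom (AddSubgroup.coarsen ψ ℳ)) ∘ coarsenMap ψ ℳ =
      DirectSum.coeAddMonoidHom ℳ :=
    congrArg DFunLike.coe (coeAddMonoidHom_comp_coarsenMap ψ ℳ)
  exact ⟨.of_comp_right (hcomp ▸ hℳ.injective) (coarsenMap_surjective ψ ℳ),
    .of_comp (hcomp ▸ hℳ.surjective)⟩

theorem coarsening_of_gradedRing_general {G H R : Type*} [AddCommGroup G] [AddCommGroup H]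
    [DecidableEq G] [DecidableEq H] [CommRing R]
    (ψ : G →+ H)
    (𝒜 : G → AddSubgroup R) [GradedRing 𝒜] :
    (1 : R) ∈ AddSubgroup.coarsen ψ 𝒜 (0 : H) ∧
    (∀ h h' : H, ∀ x ∈ AddSubgroup.coarsen ψ 𝒜 h, ∀ y ∈ AddSubgroup.coarsen ψ 𝒜 h',
      x * y ∈ AddSubgroup.coarsen ψ 𝒜 (h + h')) ∧
    DirectSum.IsInternal (AddSubgroup.coarsen ψ 𝒜) :=
  ⟨SetLike.GradedOne.one_mem, fun _ _ _ hx _ hy => SetLike.GradedMul.mul_mem hx hy,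
    (DirectSum.Decomposition.isInternal 𝒜).coarsen ψ⟩

/-- The `ψ`-coarsening of a `G`-grading of a commutative ring `R` along a surjective
group homomorphism `ψ : G →+ H` is an `H`-grading of `R`: it contains `1` in degree `0`,
is multiplicative, and decomposes `R` as an internal direct sum. -/
theorem coarsening_of_gradedRing {G H R : Type*} [AddCommGroup G] [AddCommGroup H]
    [DecidableEq G] [DecidableEq H] [CommRing R]
    (ψ : G →+ H) (hψ : Function.Surjective ψ)
    (𝒜 : G → AddSubgroup R) [GradedRing 𝒜] :
    (1 : R) ∈ AddSubgroup.coarsen ψ 𝒜 (0 : H) ∧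
    (∀ h h' : H, ∀ x ∈ AddSubgroup.coarsen ψ 𝒜 h, ∀ y ∈ AddSubgroup.coarsen ψ 𝒜 h',
      x * y ∈ AddSubgroup.coarsen ψ 𝒜 (h + h')) ∧
    DirectSum.IsInternal (AddSubgroup.coarsen ψ 𝒜) :=
  coarsening_of_gradedRing_general ψ 𝒜
end

section
/- Let G be an additive commutative group, R a commutative ring with G-grading 𝒜, and M, N G-graded R-modules with gradings ℳ, 𝒩. Then the family of additive subgroups of Hom_R(M,N) indexed by g ∈ G, where the g-th subgroup consists of the R-linear maps homogeneous of degree g (maps sending ℳ g' into 𝒩 (g'+g) for all g' ∈ G), is independent: if (f_g)_{g∈G} is a finitely supported family with f_g homogeneous of degree g for each g and ∑_{g} f_g = 0, then f_g = 0 for every g. -/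
/-- The additive subgroup of `Hom_R(M,N)` consisting of the `R`-linear maps that are
homogeneous of degree `g` with respect to the gradings `ℳ` and `𝒩`. -/
def homOfDegree {R M N G : Type*} [CommRing R] [AddCommGroup M] [Module R M]
    [AddCommGroup N] [Module R N] [AddCommGroup G]
    (ℳ : G → AddSubgroup M) (𝒩 : G → AddSubgroup N) (g : G) :
    AddSubgroup (M →ₗ[R] N) where
  carrier := {f | ∀ g' : G, ∀ x ∈ ℳ g', f x ∈ 𝒩 (g' + g)}
  add_mem' := fun ha hb g' x hx => by
    simpa using add_mem (ha g' x hx) (hb g' x hx)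
  zero_mem' := fun g' x hx => by simpa using zero_mem _
  neg_mem' := fun ha g' x hx => by simpa using neg_mem (ha g' x hx)

/-! For `x ∈ ℳ g'`, the values `F g x` lie in the pairwise distinct components `𝒩 (g' + g)`
and sum to zero, so each vanishes by independence of `𝒩`; thus `F g` vanishes on every `ℳ g'`,
and these generate `M`. -/

theorem iSupIndep.eq_zero_of_finsetSum_eq_zero {ι κ N : Type*} [AddCommGroup N]
    {p : ι → AddSubgroup N} (hp : iSupIndep p) {e : κ → ι} (he : Function.Injective e)
    {s : Finset κ} {y : κ → N} (hy : ∀ k ∈ s, y k ∈ p (e k)) (hsum : ∑ k ∈ s, y k = 0)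
    {k : κ} (hk : k ∈ s) : y k = 0 := by
  classical
  have hrest : ∑ j ∈ s.erase k, y j ∈ ⨆ i ≠ e k, p i := by
    refine AddSubgroup.sum_mem _ fun j hj => ?_
    have hne : e j ≠ e k := he.ne (Finset.ne_of_mem_erase hj)
    exact (le_iSup₂ (f := fun i (_ : i ≠ e k) => p i) (e j) hne)
      (hy j (Finset.mem_of_mem_erase hj))
  have hyk : y k = -∑ j ∈ s.erase k, y j := by
    rw [← Finset.add_sum_erase s y hk] at hsum
    exact eq_neg_of_add_eq_zero_left hsum
  exact AddSubgroup.disjoint_def.mp (hp (e k)) (hy k hk) (hyk ▸ neg_mem hrest)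

theorem DirectSum.IsInternal.apply_eq_zero_of_forall_mem {ι M S P F : Type*} [DecidableEq ι]
    [AddCommMonoid M] [SetLike S M] [AddSubmonoidClass S M] [AddCommMonoid P] [FunLike F M P]
    [AddMonoidHomClass F M P] {ℳ : ι → S} (hM : IsInternal ℳ) (f : F)
    (hf : ∀ i, ∀ x ∈ ℳ i, f x = 0) (x : M) : f x = 0 := by
  obtain ⟨w, rfl⟩ := hM.surjective x
  induction w using DirectSum.induction_on with
  | zero => simp
  | of i y => simpa using hf i y y.2
  | add v w hv hw => simp [hv, hw]

theorem homOfDegree_independent_general {G R M N : Type*}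
    [AddCommGroup G] [DecidableEq G] [CommRing R]
    [AddCommGroup M] [Module R M] [AddCommGroup N] [Module R N]
    (ℳ : G → AddSubgroup M) (𝒩 : G → AddSubgroup N)
    (hM : DirectSum.IsInternal ℳ)
    (hN : DirectSum.IsInternal 𝒩)
    (F : G →₀ (M →ₗ[R] N)) (hF : ∀ g : G, F g ∈ homOfDegree ℳ 𝒩 g)
    (hsum : (F.sum fun _ f => f) = 0) :
    ∀ g : G, F g = 0 := by
  intro g
  ext x
  refine hM.apply_eq_zero_of_forall_mem (F g) (fun g' y hy => ?_) x
  have hsum_y : ∑ h ∈ F.support, F h y = 0 := by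
    simpa [Finsupp.sum] using LinearMap.congr_fun hsum y
  by_cases hg : g ∈ F.support
  · exact hN.addSubgroup_iSupIndep.eq_zero_of_finsetSum_eq_zero (add_right_injective g')
      (fun h _ => hF h g' y hy) hsum_y hg
  · simp [Finsupp.notMem_support_iff.mp hg]

/-- The family of subgroups of homogeneous maps of degree `g` inside `Hom_R(M,N)` is
independent: if a finitely supported family `(f_g)_{g ∈ G}` with `f_g` homogeneous of
degree `g` sums to zero, then each `f_g` is zero. -/
theorem homOfDegree_independent {G R M N : Type*}
    [AddCommGroup G] [DecidableEq G] [CommRing R]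
    [AddCommGroup M] [Module R M] [AddCommGroup N] [Module R N]
    (𝒜 : G → AddSubgroup R) [GradedRing 𝒜]
    (ℳ : G → AddSubgroup M) (𝒩 : G → AddSubgroup N)
    (hM : DirectSum.IsInternal ℳ)
    (hMsmul : ∀ g g' : G, ∀ r ∈ 𝒜 g, ∀ m ∈ ℳ g', r • m ∈ ℳ (g + g'))
    (hN : DirectSum.IsInternal 𝒩)
    (hNsmul : ∀ g g' : G, ∀ r ∈ 𝒜 g, ∀ n ∈ 𝒩 g', r • n ∈ 𝒩 (g + g'))
    (F : G →₀ (M →ₗ[R] N)) (hF : ∀ g : G, F g ∈ homOfDegree ℳ 𝒩 g)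
    (hsum : (F.sum fun _ f => f) = 0) :
    ∀ g : G, F g = 0 :=
  homOfDegree_independent_general ℳ 𝒩 hM hN F hF hsum
end

section
/- Let G, H be additive commutative groups, ψ : G →+ H a surjective group homomorphism, R a commutative ring with G-grading 𝒜, and M, N G-graded R-modules with gradings ℳ, 𝒩. Assume M is finitely generated as an R-module. Then the sum, over h ∈ H, of the subgroups of Hom_R(M,N) of maps homogeneous of degree h with respect to the ψ-coarsened gradings (maps sending ⨆_{g ∈ ψ⁻¹(h')} ℳ g into ⨆_{k ∈ ψ⁻¹(h'+h)} 𝒩 k for all h' ∈ H) is equal to the sum, over g ∈ G, of the subgroups of maps homogeneous of degree g with respect to the original gradings (maps sending ℳ g' into 𝒩 (g'+g) for all g' ∈ G). -/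
open DirectSum

theorem DirectSum.coe_decompose_smul_of_mem {ι R S N σ : Type*} [DecidableEq ι]
    [AddLeftCancelMonoid ι] [Semiring R] [AddCommMonoid N] [Module R N] [SetLike S R]
    [SetLike σ N] [AddSubmonoidClass σ N] (𝒜 : ι → S) (𝒩 : ι → σ) [Decomposition 𝒩]
    [SetLike.GradedSMul 𝒜 𝒩] {i : ι} {r : R} (hr : r ∈ 𝒜 i) (y : N) (j : ι) :
    (decompose 𝒩 (r • y) (i + j) : N) = r • (decompose 𝒩 y j : N) := by
  induction y using Decomposition.inductionOn 𝒩 with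
  | zero => simp
  | @homogeneous k y =>
    have hry : r • (y : N) ∈ 𝒩 (i + k) := SetLike.GradedSMul.smul_mem hr y.2
    by_cases hkj : k = j
    · subst hkj
      rw [decompose_of_mem_same 𝒩 hry, decompose_of_mem_same 𝒩 y.2]
    · rw [decompose_of_mem_ne 𝒩 hry (mt add_left_cancel hkj), decompose_of_mem_ne 𝒩 y.2 hkj,
        smul_zero]
  | add y y' hy hy' =>
    simp only [smul_add, decompose_add, add_apply, AddMemClass.coe_add, hy, hy']

theorem AddMonoidHom.map_smul_of_homogeneous {ι R M N σ τ : Type*} [DecidableEq ι]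
    [Semiring R] [AddCommMonoid M] [Module R M] [AddCommMonoid N] [Module R N]
    [SetLike σ R] [AddSubmonoidClass σ R] [SetLike τ M] [AddSubmonoidClass τ M]
    (𝒜 : ι → σ) (ℳ : ι → τ) [Decomposition 𝒜] [Decomposition ℳ]
    (φ : M →+ N) (hφ : ∀ i j r x, r ∈ 𝒜 i → x ∈ ℳ j → φ (r • x) = r • φ x) (r : R) (x : M) :
    φ (r • x) = r • φ x := by
  induction r using Decomposition.inductionOn 𝒜 with
  | zero => simp
  | @homogeneous i r =>
    induction x using Decomposition.inductionOn ℳ with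
    | zero => simp
    | @homogeneous j x => exact hφ i j r x r.2 x.2
    | add x x' hx hx' => rw [smul_add, map_add, hx, hx', map_add, smul_add]
  | add r r' hr hr' => rw [add_smul, map_add, hr, hr', add_smul]

section GradedComponent

variable {ι R M N : Type*} [AddCommGroup ι] [DecidableEq ι] [CommRing R]
  [AddCommGroup M] [Module R M] [AddCommGroup N] [Module R N]
  (𝒜 : ι → AddSubgroup R) (ℳ : ι → AddSubgroup M) (𝒩 : ι → AddSubgroup N)
  [Decomposition 𝒜] [Decomposition ℳ] [Decomposition 𝒩]

/-- `x ↦ ∑ i, (φ xᵢ)_{i + g}`: the part of `φ` that raises degrees by `g`. -/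
noncomputable def AddMonoidHom.gradedComponent (φ : M →+ N) (g : ι) : M →+ N :=
  (toAddMonoid fun i =>
      { toFun := fun x : ℳ i => (decompose 𝒩 (φ x) (i + g) : N)
        map_zero' := by simp
        map_add' := fun x y => by simp }).comp
    (decomposeAddEquiv ℳ).toAddMonoidHom

theorem AddMonoidHom.gradedComponent_apply_of_mem (φ : M →+ N) (g : ι) {i : ι} {x : M}
    (hx : x ∈ ℳ i) : φ.gradedComponent ℳ 𝒩 g x = decompose 𝒩 (φ x) (i + g) := by
  simp [gradedComponent, decompose_of_mem ℳ hx]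

theorem AddMonoidHom.exists_finset_sum_gradedComponent_apply (φ : M →+ N) (x : M) :
    ∃ S : Finset ι, ∀ T : Finset ι, S ⊆ T → ∑ g ∈ T, φ.gradedComponent ℳ 𝒩 g x = φ x := by
  classical
  induction x using Decomposition.inductionOn ℳ with
  | zero => exact ⟨∅, fun T _ => by simp⟩
  | @homogeneous i x =>
    refine ⟨(decompose 𝒩 (φ x)).support.image (· - i), fun T hT => ?_⟩
    have hsupp : (decompose 𝒩 (φ x)).support ⊆ T.image (i + ·) := fun k hk =>
      Finset.mem_image.mpr ⟨k - i, hT (Finset.mem_image_of_mem _ hk), add_sub_cancel i k⟩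
    calc ∑ g ∈ T, φ.gradedComponent ℳ 𝒩 g x
        = ∑ k ∈ T.image (i + ·), (decompose 𝒩 (φ x) k : N) := by
          rw [Finset.sum_image fun _ _ _ _ => add_left_cancel]
          exact Finset.sum_congr rfl fun g _ => φ.gradedComponent_apply_of_mem ℳ 𝒩 g x.2
      _ = ∑ k ∈ (decompose 𝒩 (φ x)).support, (decompose 𝒩 (φ x) k : N) :=
          (Finset.sum_subset hsupp fun k _ hk => by simp [DFinsupp.notMem_support_iff.mp hk]).symm
      _ = φ x := sum_support_decompose 𝒩 _
  | add x x' hx hx' =>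
    obtain ⟨S, hS⟩ := hx
    obtain ⟨S', hS'⟩ := hx'
    refine ⟨S ∪ S', fun T hT => ?_⟩
    simp only [map_add, Finset.sum_add_distrib,
      hS T (Finset.union_subset_left hT), hS' T (Finset.union_subset_right hT)]

variable [SetLike.GradedSMul 𝒜 ℳ] [SetLike.GradedSMul 𝒜 𝒩]

noncomputable def LinearMap.gradedComponent (f : M →ₗ[R] N) (g : ι) : M →ₗ[R] N where
  __ := f.toAddMonoidHom.gradedComponent ℳ 𝒩 g
  map_smul' := f.toAddMonoidHom.gradedComponent ℳ 𝒩 g |>.map_smul_of_homogeneous 𝒜 ℳ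
    fun a i r x hr hx => by
      simp only [AddMonoidHom.gradedComponent_apply_of_mem ℳ 𝒩 _ g hx,
        AddMonoidHom.gradedComponent_apply_of_mem ℳ 𝒩 _ g (SetLike.GradedSMul.smul_mem hr hx),
        LinearMap.toAddMonoidHom_coe, map_smul, vadd_eq_add]
      rw [add_assoc]
      exact coe_decompose_smul_of_mem 𝒜 𝒩 hr _ _

@[simp]
theorem LinearMap.coe_gradedComponent (f : M →ₗ[R] N) (g : ι) :
    ⇑(f.gradedComponent 𝒜 ℳ 𝒩 g) = f.toAddMonoidHom.gradedComponent ℳ 𝒩 g :=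
  rfl

theorem LinearMap.gradedComponent_mem_homOfDegree (f : M →ₗ[R] N) (g : ι) :
    f.gradedComponent 𝒜 ℳ 𝒩 g ∈ homOfDegree ℳ 𝒩 g := fun i x hx => by
  rw [coe_gradedComponent, f.toAddMonoidHom.gradedComponent_apply_of_mem ℳ 𝒩 g hx]
  exact SetLike.coe_mem _

end GradedComponent

theorem iSup_homOfDegree_eq_top {ι R M N : Type*} [AddCommGroup ι] [DecidableEq ι] [CommRing R]
    [AddCommGroup M] [Module R M] [AddCommGroup N] [Module R N] [Module.Finite R M]
    (𝒜 : ι → AddSubgroup R) (ℳ : ι → AddSubgroup M) (𝒩 : ι → AddSubgroup N)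
    [Decomposition 𝒜] [Decomposition ℳ] [Decomposition 𝒩]
    [SetLike.GradedSMul 𝒜 ℳ] [SetLike.GradedSMul 𝒜 𝒩] :
    ⨆ g, homOfDegree (R := R) ℳ 𝒩 g = ⊤ := by
  refine eq_top_iff.mpr fun f _ => ?_
  obtain ⟨s, hs⟩ := Module.Finite.fg_top (R := R) (M := M)
  choose S hS using f.toAddMonoidHom.exists_finset_sum_gradedComponent_apply ℳ 𝒩
  have hf : f = ∑ g ∈ s.biUnion S, f.gradedComponent 𝒜 ℳ 𝒩 g :=
    LinearMap.ext_on hs fun m hm => by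
      simpa using (hS m _ (Finset.subset_biUnion_of_mem S hm)).symm
  rw [hf]
  exact AddSubgroup.sum_mem _ fun g _ =>
    AddSubgroup.mem_iSup_of_mem g (f.gradedComponent_mem_homOfDegree 𝒜 ℳ 𝒩 g)

theorem AddSubgroup.le_coarsen_s6 {G H M : Type*} [AddCommGroup G] [AddCommGroup H]
    [AddCommGroup M] (ψ : G →+ H) (ℳ : G → AddSubgroup M) {g : G} {h : H} (hg : ψ g = h) :
    ℳ g ≤ AddSubgroup.coarsen ψ ℳ h :=
  le_iSup₂ (f := fun g (_ : g ∈ ψ ⁻¹' {h}) => ℳ g) g hg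

theorem homOfDegree_le_homOfDegree_coarsen {G H R M N : Type*} [AddCommGroup G]
    [AddCommGroup H] [CommRing R] [AddCommGroup M] [Module R M] [AddCommGroup N] [Module R N]
    (ψ : G →+ H) (ℳ : G → AddSubgroup M) (𝒩 : G → AddSubgroup N) (g : G) :
    homOfDegree (R := R) ℳ 𝒩 g
      ≤ homOfDegree (AddSubgroup.coarsen ψ ℳ) (AddSubgroup.coarsen ψ 𝒩) (ψ g) := by
  intro f hf h x hx
  have hle : AddSubgroup.coarsen ψ ℳ h ≤ (AddSubgroup.coarsen ψ 𝒩 (h + ψ g)).comap f :=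
    iSup₂_le fun g' hg' y hy =>
      AddSubgroup.le_coarsen_s6 ψ 𝒩 (by rw [map_add, show ψ g' = h from hg']) (hf g' y hy)
  exact hle hx

theorem coarsened_graded_hom_eq_of_finite_general {G H R M N : Type*}
    [AddCommGroup G] [AddCommGroup H] [DecidableEq G] [CommRing R]
    [AddCommGroup M] [Module R M] [AddCommGroup N] [Module R N]
    (ψ : G →+ H)
    (𝒜 : G → AddSubgroup R) [GradedRing 𝒜]
    (ℳ : G → AddSubgroup M) (𝒩 : G → AddSubgroup N)
    (hM : DirectSum.IsInternal ℳ)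
    (hMsmul : ∀ g g' : G, ∀ r ∈ 𝒜 g, ∀ m ∈ ℳ g', r • m ∈ ℳ (g + g'))
    (hN : DirectSum.IsInternal 𝒩)
    (hNsmul : ∀ g g' : G, ∀ r ∈ 𝒜 g, ∀ n ∈ 𝒩 g', r • n ∈ 𝒩 (g + g'))
    (hfin : Module.Finite R M) :
    (⨆ h : H, homOfDegree (R := R) (AddSubgroup.coarsen ψ ℳ) (AddSubgroup.coarsen ψ 𝒩) h)
      = ⨆ g : G, homOfDegree (R := R) ℳ 𝒩 g := by
  let := hM.chooseDecomposition
  let := hN.chooseDecomposition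
  have : SetLike.GradedSMul 𝒜 ℳ := ⟨fun _ _ _ _ hr hm => hMsmul _ _ _ hr _ hm⟩
  have : SetLike.GradedSMul 𝒜 𝒩 := ⟨fun _ _ _ _ hr hn => hNsmul _ _ _ hr _ hn⟩
  have htop : ⨆ g, homOfDegree (R := R) ℳ 𝒩 g = ⊤ := iSup_homOfDegree_eq_top 𝒜 ℳ 𝒩
  rw [htop, eq_top_iff, ← htop]
  exact iSup_mono' fun g => ⟨ψ g, homOfDegree_le_homOfDegree_coarsen ψ ℳ 𝒩 g⟩

/-- If `M` is a finitely generated `R`-module, then the sum over `h ∈ H` of the subgroups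
of maps homogeneous of degree `h` with respect to the `ψ`-coarsened gradings equals the
sum over `g ∈ G` of the subgroups of maps homogeneous of degree `g` with respect to the
original gradings. -/
theorem coarsened_graded_hom_eq_of_finite {G H R M N : Type*}
    [AddCommGroup G] [AddCommGroup H] [DecidableEq G] [DecidableEq H] [CommRing R]
    [AddCommGroup M] [Module R M] [AddCommGroup N] [Module R N]
    (ψ : G →+ H) (hψ : Function.Surjective ψ)
    (𝒜 : G → AddSubgroup R) [GradedRing 𝒜]
    (ℳ : G → AddSubgroup M) (𝒩 : G → AddSubgroup N)
    (hM : DirectSum.IsInternal ℳ)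
    (hMsmul : ∀ g g' : G, ∀ r ∈ 𝒜 g, ∀ m ∈ ℳ g', r • m ∈ ℳ (g + g'))
    (hN : DirectSum.IsInternal 𝒩)
    (hNsmul : ∀ g g' : G, ∀ r ∈ 𝒜 g, ∀ n ∈ 𝒩 g', r • n ∈ 𝒩 (g + g'))
    (hfin : Module.Finite R M) :
    (⨆ h : H, homOfDegree (R := R) (AddSubgroup.coarsen ψ ℳ) (AddSubgroup.coarsen ψ 𝒩) h)
      = ⨆ g : G, homOfDegree (R := R) ℳ 𝒩 g :=
  coarsened_graded_hom_eq_of_finite_general ψ 𝒜 ℳ 𝒩 hM hMsmul hN hNsmul hfin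
end

section
/- Let K be a field and let R = AddMonoidAlgebra K ℚ≥0 be the algebra over K of the additive monoid ℚ≥0 of nonnegative rational numbers, with canonical basis elements e_α = single α 1 for α ∈ ℚ≥0. Let 𝔪 be the ideal of R generated by { e_α | α ∈ ℚ≥0, α > 0 }. Then 𝔪 is idempotent: 𝔪 * 𝔪 = 𝔪. -/
open scoped NNRat Pointwise

theorem Ideal.span_mul_span_self_of_subset {R : Type*} [CommSemiring R] {S : Set R}
    (hS : S ⊆ S * S) : Ideal.span S * Ideal.span S = Ideal.span S :=
  le_antisymm Ideal.mul_le_left <| by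
    rw [Ideal.span_mul_span']
    exact Ideal.span_mono hS

theorem AddMonoidAlgebra.single_pos_subset_mul_self (k : Type*) [Semiring k] :
    {x : AddMonoidAlgebra k ℚ≥0 | ∃ α : ℚ≥0, 0 < α ∧ x = single α 1} ⊆
      {x | ∃ α : ℚ≥0, 0 < α ∧ x = single α 1} * {x | ∃ α : ℚ≥0, 0 < α ∧ x = single α 1} := by
  rintro _ ⟨α, hα, rfl⟩
  have hhalf : 0 < α / 2 := by positivity
  refine ⟨_, ⟨α / 2, hhalf, rfl⟩, _, ⟨α / 2, hhalf, rfl⟩, ?_⟩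
  dsimp only
  rw [single_mul_single, one_mul, add_halves]

/-- In the monoid algebra `R = K[ℚ≥0]` of the additive monoid of nonnegative rationals
over a field `K`, the ideal `𝔪` generated by the elements `e_α = single α 1` with
`α > 0` is idempotent: `𝔪 * 𝔪 = 𝔪`. -/
theorem maximal_graded_ideal_idempotent (K : Type*) [Field K]
    (𝔪 : Ideal (AddMonoidAlgebra K ℚ≥0))
    (h𝔪 : 𝔪 = Ideal.span
      {x : AddMonoidAlgebra K ℚ≥0 | ∃ α : ℚ≥0, 0 < α ∧ x = AddMonoidAlgebra.single α 1}) :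
    𝔪 * 𝔪 = 𝔪 := by
  subst h𝔪
  exact Ideal.span_mul_span_self_of_subset (AddMonoidAlgebra.single_pos_subset_mul_self K)
end

section
/- Let K be a field and let R = AddMonoidAlgebra K ℚ≥0 be the algebra over K of the additive monoid ℚ≥0 of nonnegative rational numbers, with canonical basis elements e_α = single α 1 for α ∈ ℚ≥0. Let 𝔪 be the ideal of R generated by { e_α | α ∈ ℚ≥0, α > 0 }. Then 𝔪 is not finitely generated as an ideal of R. -/
/-!
The ideal spanned by the `e_β` with `β > a` is the directed union, over `b > a`, of the ideals
spanned by the `e_β` with `β ≥ b`, so if it were finitely generated it would lie in one of them.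
But every element of the latter ideal is supported in `[b, ∞)`, while by density there is
some `a < c < b`, and `e_c` belongs to the former ideal.
-/

open scoped NNRat
open Set

namespace AddMonoidAlgebra

variable {k M : Type*} [Semiring k]

theorem ideal_span_of'_Ioi_eq_iSup [AddMonoid M] [Preorder M] (a : M) :
    Ideal.span (of' k M '' Ioi a) = ⨆ b : Ioi a, Ideal.span (of' k M '' Ici (b : M)) := by
  rw [← Ideal.span_iUnion, ← image_iUnion]
  congr
  ext x
  simpa using ⟨fun hx ↦ ⟨x, hx, le_rfl⟩, fun ⟨b, hab, hbx⟩ ↦ hab.trans_le hbx⟩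

variable [AddCommMonoid M] [LinearOrder M] [CanonicallyOrderedAdd M]

theorem of'_notMem_ideal_span_of'_Ici [Nontrivial k] {a b : M} (hab : a < b) :
    of' k M a ∉ Ideal.span (of' k M '' Ici b) := by
  rw [mem_ideal_span_of'_image]
  intro h
  obtain ⟨m, hbm, d, rfl⟩ := h a (by simp)
  exact hab.not_ge (hbm.trans le_add_self)

theorem not_fg_ideal_span_of'_Ioi [Nontrivial k] [DenselyOrdered M] [NoMaxOrder M] (a : M) :
    ¬ (Ideal.span (of' k M '' Ioi a)).FG := by
  intro hfg
  have hdir : Directed (· ≤ ·) fun b : Ioi a ↦ Ideal.span (of' k M '' Ici (b : M)) :=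
    Antitone.directed_le fun b c hbc ↦ Ideal.span_mono (image_mono (Ici_subset_Ici.mpr hbc))
  obtain ⟨_, ⟨b, rfl⟩, hb⟩ := (CompleteLattice.isCompactElement_iff_le_of_directed_sSup_le _ _).mp
    ((Submodule.fg_iff_compact _).mp hfg) _ (range_nonempty _) (directedOn_range.mpr hdir)
    (ideal_span_of'_Ioi_eq_iSup a).le
  obtain ⟨c, hac, hcb⟩ := exists_between b.2
  exact of'_notMem_ideal_span_of'_Ici hcb (hb (Ideal.subset_span ⟨c, hac, rfl⟩))

end AddMonoidAlgebra

/-- In the monoid algebra `R = K[ℚ≥0]` of the additive monoid of nonnegative rationals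
over a field `K`, the ideal `𝔪` generated by the elements `e_α = single α 1` with
`α > 0` is not finitely generated. -/
theorem maximal_graded_ideal_not_fg (K : Type*) [Field K]
    (𝔪 : Ideal (AddMonoidAlgebra K ℚ≥0))
    (h𝔪 : 𝔪 = Ideal.span
      {x : AddMonoidAlgebra K ℚ≥0 | ∃ α : ℚ≥0, 0 < α ∧ x = AddMonoidAlgebra.single α 1}) :
    ¬ 𝔪.FG := by
  have hgen : {x : AddMonoidAlgebra K ℚ≥0 | ∃ α : ℚ≥0, 0 < α ∧ x = AddMonoidAlgebra.single α 1} =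
      AddMonoidAlgebra.of' K ℚ≥0 '' Ioi 0 := by
    ext x
    simp [eq_comm]
  rw [h𝔪, hgen]
  exact AddMonoidAlgebra.not_fg_ideal_span_of'_Ioi 0
end
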